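/- arXiv:2108.09161 — 7 statements merged into one kernel-verified Lean document; each statement's English description precedes it below -/
import Mathlib

section
/- Let d ≥ 1, let R be a Borel probability measure on ℝ^{2d} × ℝ^{2d}, and let μ, ν be Borel probability measures on ℝ^d. Suppose μ^T ∈ Π_X(μ,ν) minimizes H(·|R) over Π_X(μ,ν) and H(μ^T|R) < ∞. Let μ̄ and ν̄ denote respectively the first and second ℝ^{2d}-marginals of μ^T. Then inf { H(π|R) : π ∈ Π(μ̄,ν̄) } = H(μ^T|R) = inf { H(π|R) : π ∈ Π_X(μ,ν) }, and μ^T is a minimizer of H(·|R) over Π(μ̄,ν̄). -/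
open MeasureTheory Filter Topology

/- Relative entropy `H(P|Q)`: `∫ log (dP/dQ) dP` if `P ≪ Q` (and the integral makes
sense), and `+∞` otherwise. -/
open Classical in
noncomputable def relEntropy {α : Type*} [MeasurableSpace α] (P Q : Measure α) : EReal :=
  if P ≪ Q ∧ Integrable (llr P Q) P then ((∫ x, llr P Q x ∂P : ℝ) : EReal) else ⊤

/-- The set of couplings `Π(μ,ν)`: probability measures on `α × α` with first marginal `μ`
and second marginal `ν`. -/
def couplings {α : Type*} [MeasurableSpace α] (μ ν : Measure α) : Set (Measure (α × α)) :=
  {p | IsProbabilityMeasure p ∧ p.map Prod.fst = μ ∧ p.map Prod.snd = ν}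

/-- The set `Π_X(μ,ν)`: probability measures on `(α × α) × (α × α)`
(points `((x₁,v₁),(x₂,v₂))`) whose pushforwards under `((x₁,v₁),(x₂,v₂)) ↦ x₁` and
`((x₁,v₁),(x₂,v₂)) ↦ x₂` are `μ` and `ν` respectively. -/
def PiX {α : Type*} [MeasurableSpace α] (μ ν : Measure α) :
    Set (Measure ((α × α) × (α × α))) :=
  {p | IsProbabilityMeasure p ∧ p.map (fun z => z.1.1) = μ ∧ p.map (fun z => z.2.1) = ν}

/-- the kinetic Schrödinger problem coincides with the fully constrained
problem whose marginals are those of the kinetic optimizer. -/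
theorem kinetic_vs_full_schrodinger
    (d : ℕ) (hd : 1 ≤ d)
    (R : Measure ((EuclideanSpace ℝ (Fin d) × EuclideanSpace ℝ (Fin d)) ×
      (EuclideanSpace ℝ (Fin d) × EuclideanSpace ℝ (Fin d))))
    [IsProbabilityMeasure R]
    (μ ν : Measure (EuclideanSpace ℝ (Fin d)))
    [IsProbabilityMeasure μ] [IsProbabilityMeasure ν]
    (μT : Measure ((EuclideanSpace ℝ (Fin d) × EuclideanSpace ℝ (Fin d)) ×
      (EuclideanSpace ℝ (Fin d) × EuclideanSpace ℝ (Fin d))))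
    (hmem : μT ∈ PiX μ ν)
    (hmin : ∀ p ∈ PiX μ ν, relEntropy μT R ≤ relEntropy p R)
    (hfin : relEntropy μT R ≠ ⊤) :
    (⨅ p ∈ couplings (μT.map Prod.fst) (μT.map Prod.snd), relEntropy p R)
        = relEntropy μT R ∧
    relEntropy μT R = (⨅ p ∈ PiX μ ν, relEntropy p R) ∧
    μT ∈ couplings (μT.map Prod.fst) (μT.map Prod.snd) ∧
    ∀ p ∈ couplings (μT.map Prod.fst) (μT.map Prod.snd),
      relEntropy μT R ≤ relEntropy p R := by
  obtain ⟨hprob, h1, h2⟩ := hmem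
  have hsub : couplings (μT.map Prod.fst) (μT.map Prod.snd) ⊆ PiX μ ν := by
    rintro p ⟨hp, hp1, hp2⟩
    refine ⟨hp, ?_, ?_⟩
    · calc p.map (fun z => z.1.1) = (p.map Prod.fst).map Prod.fst :=
            (Measure.map_map measurable_fst measurable_fst).symm
        _ = (μT.map Prod.fst).map Prod.fst := by rw [hp1]
        _ = μT.map (fun z => z.1.1) := Measure.map_map measurable_fst measurable_fst
        _ = μ := h1
    · calc p.map (fun z => z.2.1) = (p.map Prod.snd).map Prod.fst :=
            (Measure.map_map measurable_fst measurable_snd).symm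
        _ = (μT.map Prod.snd).map Prod.fst := by rw [hp2]
        _ = μT.map (fun z => z.2.1) := Measure.map_map measurable_fst measurable_snd
        _ = ν := h2
  have hmemc : μT ∈ couplings (μT.map Prod.fst) (μT.map Prod.snd) := ⟨hprob, rfl, rfl⟩
  have hminc : ∀ p ∈ couplings (μT.map Prod.fst) (μT.map Prod.snd),
      relEntropy μT R ≤ relEntropy p R := fun p hp => hmin p (hsub hp)
  refine ⟨le_antisymm (iInf₂_le μT hmemc) (le_iInf₂ hminc), ?_, hmemc, hminc⟩
  exact le_antisymm (le_iInf₂ hmin) (iInf₂_le μT ⟨hprob, h1, h2⟩)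
end

section
/- Let m_X, m_V, μ, ν be Borel probability measures on ℝ^d and set m := m_X ⊗ m_V, a probability measure on ℝ^{2d} = ℝ^d_x × ℝ^d_v. Then for every π ∈ Π_X(μ,ν) one has H(π | m ⊗ m) ≥ H(μ|m_X) + H(ν|m_X). The measure π* := (μ ⊗ m_V) ⊗ (ν ⊗ m_V) belongs to Π_X(μ,ν) and satisfies H(π* | m ⊗ m) = H(μ|m_X) + H(ν|m_X). Moreover, if H(μ|m_X) + H(ν|m_X) < ∞, then π* is the unique minimizer of H(·|m ⊗ m) over Π_X(μ,ν). -/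
open MeasureTheory Filter Topology

/-!
If `p ∈ Π_X(μ,ν)` and `p ≪ m ⊗ m`, then `π* = (μ ⊗ m_V) ⊗ (ν ⊗ m_V)` has density
`(dμ/dm_X)(x₁) · (dν/dm_X)(x₂)` with respect to `m ⊗ m`, which is positive `p`-a.e. Hence
`p ≪ π*`, and the chain rule `log dp/d(m ⊗ m) = log dp/dπ* + log dπ*/d(m ⊗ m)`, integrated
against `p` whose `x`-marginals are `μ` and `ν`, gives
`H(p | m ⊗ m) = H(μ | m_X) + H(ν | m_X) + H(p | π*)`
in `[0, ∞]`. Gibbs' inequality `H(p | π*) ≥ 0`, with equality only at `p = π*`, does the rest.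
-/

open InformationTheory
open scoped ENNReal

section General

variable {Ω : Type*} [MeasurableSpace Ω]

lemma relEntropy_eq_klDiv (P Q : Measure Ω) [IsProbabilityMeasure P] [IsProbabilityMeasure Q] :
    relEntropy P Q = klDiv P Q := by
  rw [relEntropy]
  split_ifs with h
  · have h_nonneg := integral_llr_add_sub_measure_univ_nonneg h.1 h.2
    simp only [probReal_univ, add_sub_cancel_right] at h_nonneg
    rw [klDiv_of_ac_of_integrable h.1 h.2]
    simp [EReal.coe_ennreal_ofReal, h_nonneg]
  · rw [klDiv_eq_top_iff.mpr fun hac hint ↦ h ⟨hac, hint⟩]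
    rfl

lemma toReal_klDiv_of_isProbabilityMeasure {P Q : Measure Ω} [IsProbabilityMeasure P]
    [IsProbabilityMeasure Q] (hPQ : P ≪ Q) (h_int : Integrable (llr P Q) P) :
    (klDiv P Q).toReal = ∫ x, llr P Q x ∂P := by
  simp [toReal_klDiv hPQ h_int]

lemma MeasureTheory.Measure.AbsolutelyContinuous.of_ae_rnDeriv_ne_zero {P Q R : Measure Ω}
    [R.HaveLebesgueDecomposition Q] (hPQ : P ≪ Q) (hRQ : R ≪ Q)
    (h : ∀ᵐ x ∂P, R.rnDeriv Q x ≠ 0) : P ≪ R := by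
  refine Measure.AbsolutelyContinuous.mk fun s hs hRs ↦ ?_
  rw [← Measure.withDensity_rnDeriv_eq R Q hRQ, withDensity_apply _ hs,
    setLIntegral_eq_zero_iff hs (Measure.measurable_rnDeriv R Q)] at hRs
  have : ∀ᵐ x ∂P, x ∉ s := by
    filter_upwards [hPQ.ae_le hRs, h] with x hx hne hxs using hne (hx hxs)
  simpa using ae_iff.mp this

lemma ae_toReal_rnDeriv_pos {P Q : Measure Ω} [SigmaFinite P] [SigmaFinite Q] (hPQ : P ≪ Q) :
    ∀ᵐ x ∂P, 0 < (P.rnDeriv Q x).toReal := by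
  filter_upwards [Measure.rnDeriv_pos hPQ, hPQ.ae_le (Measure.rnDeriv_lt_top P Q)] with x h0 htop
  exact ENNReal.toReal_pos h0.ne' htop.ne

lemma llr_ae_eq_llr_add_llr {P Q R : Measure Ω} [SigmaFinite P] [SigmaFinite Q] [SigmaFinite R]
    (hPR : P ≪ R) (hRQ : R ≪ Q) : llr P Q =ᵐ[P] llr P R + llr R Q := by
  filter_upwards [(hPR.trans hRQ).ae_le (Measure.rnDeriv_mul_rnDeriv hPR),
    ae_toReal_rnDeriv_pos hPR, hPR.ae_le (ae_toReal_rnDeriv_pos hRQ)] with x hmul hPR_pos hRQ_pos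
  simp only [llr, Pi.add_apply, ← hmul, Pi.mul_apply, ENNReal.toReal_mul]
  exact Real.log_mul hPR_pos.ne' hRQ_pos.ne'

end General

section Product

variable {X V X' V' : Type*} [MeasurableSpace X] [MeasurableSpace V] [MeasurableSpace X']
  [MeasurableSpace V']

lemma map_fst_fst_prod_prod (μ : Measure X) (κ : Measure V) (ν : Measure X') (η : Measure V')
    [SFinite μ] [IsProbabilityMeasure κ] [IsProbabilityMeasure ν] [IsProbabilityMeasure η] :
    ((μ.prod κ).prod (ν.prod η)).map (fun z ↦ z.1.1) = μ := by
  rw [← Function.comp_def, ← Measure.map_map measurable_fst measurable_fst]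
  simp

lemma map_fst_snd_prod_prod (μ : Measure X) (κ : Measure V) (ν : Measure X') (η : Measure V')
    [IsProbabilityMeasure μ] [IsProbabilityMeasure κ] [SFinite ν] [IsProbabilityMeasure η] :
    ((μ.prod κ).prod (ν.prod η)).map (fun z ↦ z.2.1) = ν := by
  rw [← Function.comp_def Prod.fst Prod.snd, ← Measure.map_map measurable_fst measurable_snd]
  simp

lemma prod_prod_eq_withDensity {μ μ' : Measure X} {ν ν' : Measure X'} (κ : Measure V)
    (η : Measure V') [SigmaFinite μ] [SigmaFinite μ'] [SigmaFinite ν] [SigmaFinite ν']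
    [SFinite κ] [SFinite η] (hμ : μ ≪ μ') (hν : ν ≪ ν') :
    (μ.prod κ).prod (ν.prod η) = ((μ'.prod κ).prod (ν'.prod η)).withDensity
      (fun z ↦ μ.rnDeriv μ' z.1.1 * ν.rnDeriv ν' z.2.1) := by
  conv_lhs =>
    rw [← Measure.withDensity_rnDeriv_eq _ _ hμ, ← Measure.withDensity_rnDeriv_eq _ _ hν]
  rw [prod_withDensity_left (Measure.measurable_rnDeriv μ μ'),
    prod_withDensity_left (Measure.measurable_rnDeriv ν ν'),
    prod_withDensity (by fun_prop) (by fun_prop)]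

end Product

section Kinetic

variable {X V : Type*} [MeasurableSpace X] [MeasurableSpace V] {mX μ ν : Measure X}
  {mV : Measure V} {p : Measure ((X × V) × (X × V))}

lemma absolutelyContinuous_of_map_eq [IsProbabilityMeasure mX] [IsProbabilityMeasure mV]
    (hp₁ : p.map (fun z ↦ z.1.1) = μ) (hp₂ : p.map (fun z ↦ z.2.1) = ν)
    (hpQ : p ≪ (mX.prod mV).prod (mX.prod mV)) :
    μ ≪ mX ∧ ν ≪ mX :=
  ⟨by simpa [hp₁, map_fst_fst_prod_prod] using hpQ.map (f := fun z ↦ z.1.1) (by fun_prop),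
    by simpa [hp₂, map_fst_snd_prod_prod] using hpQ.map (f := fun z ↦ z.2.1) (by fun_prop)⟩

lemma llr_ae_eq_llr_prod_prod_add [IsProbabilityMeasure mX] [IsProbabilityMeasure mV]
    [SigmaFinite μ] [SigmaFinite ν] [SigmaFinite p]
    (hp₁ : p.map (fun z ↦ z.1.1) = μ) (hp₂ : p.map (fun z ↦ z.2.1) = ν)
    (hpQ : p ≪ (mX.prod mV).prod (mX.prod mV)) :
    p ≪ (μ.prod mV).prod (ν.prod mV) ∧
    llr p ((mX.prod mV).prod (mX.prod mV)) =ᵐ[p]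
      fun z ↦ llr p ((μ.prod mV).prod (ν.prod mV)) z + (llr μ mX z.1.1 + llr ν mX z.2.1) := by
  obtain ⟨hμ, hν⟩ := absolutelyContinuous_of_map_eq hp₁ hp₂ hpQ
  have hπQ : (μ.prod mV).prod (ν.prod mV) ≪ (mX.prod mV).prod (mX.prod mV) :=
    (hμ.prod .rfl).prod (hν.prod .rfl)
  have h_density : ((μ.prod mV).prod (ν.prod mV)).rnDeriv ((mX.prod mV).prod (mX.prod mV))
      =ᵐ[p] fun z ↦ μ.rnDeriv mX z.1.1 * ν.rnDeriv mX z.2.1 := by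
    rw [prod_prod_eq_withDensity mV mV hμ hν]
    exact hpQ.ae_le (Measure.rnDeriv_withDensity _ (by fun_prop))
  have hμ_pos : ∀ᵐ z ∂p, 0 < (μ.rnDeriv mX z.1.1).toReal :=
    ae_of_ae_map (μ := p) (f := fun z ↦ z.1.1) (by fun_prop)
      (by rw [hp₁]; exact ae_toReal_rnDeriv_pos hμ)
  have hν_pos : ∀ᵐ z ∂p, 0 < (ν.rnDeriv mX z.2.1).toReal :=
    ae_of_ae_map (μ := p) (f := fun z ↦ z.2.1) (by fun_prop)
      (by rw [hp₂]; exact ae_toReal_rnDeriv_pos hν)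
  have hpπ : p ≪ (μ.prod mV).prod (ν.prod mV) := by
    refine .of_ae_rnDeriv_ne_zero hpQ hπQ ?_
    filter_upwards [h_density, hμ_pos, hν_pos] with z hz h1 h2
    rw [hz]
    exact mul_ne_zero (ENNReal.toReal_pos_iff.mp h1).1.ne' (ENNReal.toReal_pos_iff.mp h2).1.ne'
  refine ⟨hpπ, ?_⟩
  filter_upwards [llr_ae_eq_llr_add_llr hpπ hπQ, h_density, hμ_pos, hν_pos] with z hz hd h1 h2
  simp only [hz, Pi.add_apply, llr_def, hd, ENNReal.toReal_mul, Real.log_mul h1.ne' h2.ne']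

variable [IsProbabilityMeasure mX] [IsProbabilityMeasure mV] [IsProbabilityMeasure μ]
  [IsProbabilityMeasure ν] [IsProbabilityMeasure p]

lemma klDiv_eq_add_klDiv_of_integrable (hp₁ : p.map (fun z ↦ z.1.1) = μ)
    (hp₂ : p.map (fun z ↦ z.2.1) = ν) (hpQ : p ≪ (mX.prod mV).prod (mX.prod mV))
    (hμ_int : Integrable (llr μ mX) μ) (hν_int : Integrable (llr ν mX) ν) :
    klDiv p ((mX.prod mV).prod (mX.prod mV)) =
      klDiv μ mX + klDiv ν mX + klDiv p ((μ.prod mV).prod (ν.prod mV)) := by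
  obtain ⟨hμ, hν⟩ := absolutelyContinuous_of_map_eq hp₁ hp₂ hpQ
  obtain ⟨hpπ, h_llr⟩ := llr_ae_eq_llr_prod_prod_add hp₁ hp₂ hpQ
  have hF₁ : Integrable (fun z ↦ llr μ mX z.1.1) p := by
    subst hp₁; exact hμ_int.comp_measurable (by fun_prop)
  have hF₂ : Integrable (fun z ↦ llr ν mX z.2.1) p := by
    subst hp₂; exact hν_int.comp_measurable (by fun_prop)
  have h_iff : Integrable (llr p ((mX.prod mV).prod (mX.prod mV))) p ↔
      Integrable (llr p ((μ.prod mV).prod (ν.prod mV))) p := by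
    rw [integrable_congr h_llr]
    exact integrable_add_iff_integrable_left' (hF₁.add hF₂)
  by_cases h_int : Integrable (llr p ((μ.prod mV).prod (ν.prod mV))) p
  swap
  · simp [klDiv_of_not_integrable h_int, klDiv_of_not_integrable (h_iff.not.mpr h_int)]
  have hI₁ : ∫ z, llr μ mX z.1.1 ∂p = ∫ x, llr μ mX x ∂μ := by
    subst hp₁; exact (integral_map_of_stronglyMeasurable (by fun_prop) (by fun_prop)).symm
  have hI₂ : ∫ z, llr ν mX z.2.1 ∂p = ∫ x, llr ν mX x ∂ν := by
    subst hp₂; exact (integral_map_of_stronglyMeasurable (by fun_prop) (by fun_prop)).symm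
  have hμ_fin := klDiv_ne_top hμ hμ_int
  have hν_fin := klDiv_ne_top hν hν_int
  have hpπ_fin := klDiv_ne_top hpπ h_int
  rw [← ENNReal.toReal_eq_toReal_iff' (klDiv_ne_top hpQ (h_iff.mpr h_int)) (by simp [*]),
    ENNReal.toReal_add (by simp [*]) hpπ_fin, ENNReal.toReal_add hμ_fin hν_fin,
    toReal_klDiv_of_isProbabilityMeasure hpQ (h_iff.mpr h_int),
    toReal_klDiv_of_isProbabilityMeasure hμ hμ_int,
    toReal_klDiv_of_isProbabilityMeasure hν hν_int,
    toReal_klDiv_of_isProbabilityMeasure hpπ h_int, integral_congr_ae h_llr,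
    integral_add (g := fun z ↦ llr μ mX z.1.1 + llr ν mX z.2.1) h_int (hF₁.add hF₂),
    integral_add hF₁ hF₂, hI₁, hI₂]
  ring

lemma klDiv_eq_add_klDiv (hp₁ : p.map (fun z ↦ z.1.1) = μ)
    (hp₂ : p.map (fun z ↦ z.2.1) = ν) :
    klDiv p ((mX.prod mV).prod (mX.prod mV)) =
      klDiv μ mX + klDiv ν mX + klDiv p ((μ.prod mV).prod (ν.prod mV)) := by
  by_cases hpQ : p ≪ (mX.prod mV).prod (mX.prod mV)
  swap
  · rw [klDiv_of_not_ac hpQ]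
    by_cases hac : μ ≪ mX ∧ ν ≪ mX
    · have hpπ : ¬ p ≪ (μ.prod mV).prod (ν.prod mV) :=
        fun hpπ ↦ hpQ (hpπ.trans ((hac.1.prod .rfl).prod (hac.2.prod .rfl)))
      rw [klDiv_of_not_ac hpπ, add_top]
    · rcases not_and_or.mp hac with h | h <;> simp [klDiv_of_not_ac h]
  by_cases h_marg : Integrable (llr μ mX) μ ∧ Integrable (llr ν mX) ν
  · exact klDiv_eq_add_klDiv_of_integrable hp₁ hp₂ hpQ h_marg.1 h_marg.2
  -- data processing: the `x`-marginals are images of `p` and of `m ⊗ m`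
  have h_int : ¬ Integrable (llr p ((mX.prod mV).prod (mX.prod mV))) p := fun h ↦ h_marg
    ⟨by simpa [hp₁, map_fst_fst_prod_prod] using
        integrable_llr_map hpQ (g := fun z ↦ z.1.1) (by fun_prop) h,
      by simpa [hp₂, map_fst_snd_prod_prod] using
        integrable_llr_map hpQ (g := fun z ↦ z.2.1) (by fun_prop) h⟩
  rcases not_and_or.mp h_marg with h | h <;>
    simp [klDiv_of_not_integrable h, klDiv_of_not_integrable h_int]

end Kinetic

/-- the solution of the limiting entropy minimization problem
`min over Π_X(μ,ν) of H(·| m ⊗ m)` with `m = m_X ⊗ m_V` is `(μ ⊗ m_V) ⊗ (ν ⊗ m_V)`,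
with optimal value `H(μ|m_X) + H(ν|m_X)`. -/
theorem limiting_problem_kinetic
    (d : ℕ)
    (mX mV μ ν : Measure (EuclideanSpace ℝ (Fin d)))
    [IsProbabilityMeasure mX] [IsProbabilityMeasure mV]
    [IsProbabilityMeasure μ] [IsProbabilityMeasure ν] :
    (∀ p ∈ PiX μ ν,
        relEntropy μ mX + relEntropy ν mX ≤ relEntropy p ((mX.prod mV).prod (mX.prod mV))) ∧
    (μ.prod mV).prod (ν.prod mV) ∈ PiX μ ν ∧
    relEntropy ((μ.prod mV).prod (ν.prod mV)) ((mX.prod mV).prod (mX.prod mV))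
      = relEntropy μ mX + relEntropy ν mX ∧
    ((relEntropy μ mX ≠ ⊤ ∧ relEntropy ν mX ≠ ⊤) →
      ∀ p ∈ PiX μ ν, p ≠ (μ.prod mV).prod (ν.prod mV) →
        relEntropy ((μ.prod mV).prod (ν.prod mV)) ((mX.prod mV).prod (mX.prod mV))
          < relEntropy p ((mX.prod mV).prod (mX.prod mV))) := by
  have hπ : (μ.prod mV).prod (ν.prod mV) ∈ PiX μ ν :=
    ⟨inferInstance, map_fst_fst_prod_prod μ mV ν mV, map_fst_snd_prod_prod μ mV ν mV⟩
  have h_decomp : ∀ p ∈ PiX μ ν, relEntropy p ((mX.prod mV).prod (mX.prod mV)) =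
      (klDiv μ mX + klDiv ν mX + klDiv p ((μ.prod mV).prod (ν.prod mV)) : ℝ≥0∞) := by
    rintro p ⟨hp, hp₁, hp₂⟩
    rw [relEntropy_eq_klDiv, klDiv_eq_add_klDiv hp₁ hp₂]
  have h_marg :
      relEntropy μ mX + relEntropy ν mX = (klDiv μ mX + klDiv ν mX : ℝ≥0∞) := by
    rw [relEntropy_eq_klDiv, relEntropy_eq_klDiv, EReal.coe_ennreal_add]
  have h_opt : relEntropy ((μ.prod mV).prod (ν.prod mV)) ((mX.prod mV).prod (mX.prod mV)) =
      relEntropy μ mX + relEntropy ν mX := by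
    rw [h_decomp _ hπ, klDiv_self, add_zero, h_marg]
  refine ⟨fun p hp ↦ ?_, hπ, h_opt, fun ⟨hμ, hν⟩ p hp hne ↦ ?_⟩
  · rw [h_decomp p hp, h_marg, EReal.coe_ennreal_le_coe_ennreal_iff]
    exact le_self_add
  · have : IsProbabilityMeasure p := hp.1
    rw [h_opt, h_decomp p hp, h_marg, EReal.coe_ennreal_lt_coe_ennreal_iff]
    rw [relEntropy_eq_klDiv, Ne, EReal.coe_ennreal_eq_top_iff] at hμ hν
    exact ENNReal.lt_add_right (ENNReal.add_ne_top.mpr ⟨hμ, hν⟩)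
      (klDiv_eq_zero_iff.not.mpr hne)
end

section
/- Let N ≥ 1, let R be a Borel probability measure on ℝ^N, and let P be a Borel probability measure with P ≪ R and H(P|R) < ∞; write ρ := dP/dR. Let (K_n)_{n∈ℕ} be an increasing sequence of compact subsets of ℝ^N with ⋃_n K_n = ℝ^N, and set C_n := ∫_{K_n} (ρ ∧ n) dR. Then C_n → 1 as n → ∞; for every n with C_n > 0, the measure q_n := C_n^{−1} (ρ ∧ n) 1_{K_n} · R is a Borel probability measure; and, along the indices n with C_n > 0, q_n converges weakly to P and H(q_n|R) → H(P|R). -/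
open MeasureTheory Filter Topology
open scoped ENNReal

/-! The truncations `gₙ = 1_{Kₙ} (ρ ∧ n)` of `ρ = dP/dR` are bounded by `ρ` and agree with `ρ`
from some index on wherever `ρ < ∞`, hence `R`-a.e.; so `Cₙ = ∫ gₙ dR → ∫ ρ dR = 1`. The densities
`gₙ / Cₙ` of `qₙ` therefore converge to `ρ` a.e. and, once `Cₙ > 1/2`, are dominated by `2ρ`.
Dominated convergence gives `∫ f dqₙ → ∫ f ρ dR = ∫ f dP`. Since `|x log x| ≤ 1 + |y log y|` for
`0 ≤ x ≤ y`, and `H(P|R) < ∞` makes `ρ log ρ`, hence `2ρ log (2ρ)`, integrable, it also gives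
`H(qₙ|R) = ∫ (gₙ/Cₙ) log (gₙ/Cₙ) dR → ∫ ρ log ρ dR = H(P|R)`. -/

open Real
open scoped NNReal BoundedContinuousFunction

lemma Real.abs_mul_log_le_of_le {x y : ℝ} (hx : 0 ≤ x) (hxy : x ≤ y) :
    |x * log x| ≤ 1 + |y * log y| := by
  rw [abs_le]
  refine ⟨by linarith [self_sub_one_le_mul_log hx, abs_nonneg (y * log y)], ?_⟩
  rcases le_or_gt x 1 with hx1 | hx1
  · linarith [mul_log_nonpos hx hx1, abs_nonneg (y * log y)]
  · have : x * log x ≤ y * log y :=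
      mul_le_mul hxy (log_le_log (by linarith) hxy) (log_nonneg hx1.le) (by linarith)
    linarith [le_abs_self (y * log y)]

lemma MeasureTheory.Integrable.const_mul_mul_log {α : Type*} [MeasurableSpace α] {μ : Measure α}
    {f : α → ℝ} (hf : Integrable f μ) (hfl : Integrable (fun z => f z * log (f z)) μ) (c : ℝ) :
    Integrable (fun z => c * f z * log (c * f z)) μ := by
  have h z : c * f z * log (c * f z) = c * log c * f z + c * (f z * log (f z)) := by
    have := negMulLog_mul c (f z)
    simp only [negMulLog] at this
    linear_combination -this
  simp only [h]
  exact (hf.const_mul (c * log c)).add (hfl.const_mul c)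

section RelEntropy

variable {α : Type*} [MeasurableSpace α] {P R : Measure α} [SigmaFinite R]

lemma integrable_mul_log_rnDeriv_of_relEntropy_ne_top [SigmaFinite P] (h : relEntropy P R ≠ ⊤) :
    Integrable (fun z => (P.rnDeriv R z).toReal * log (P.rnDeriv R z).toReal) R := by
  rw [relEntropy] at h
  split_ifs at h with hP
  · exact (integrable_toReal_rnDeriv_mul_iff hP.1).2 hP.2
  · exact absurd rfl h

lemma relEntropy_eq_integral_mul_log_rnDeriv [SigmaFinite P] (hac : P ≪ R)
    (hint : Integrable (fun z => (P.rnDeriv R z).toReal * log (P.rnDeriv R z).toReal) R) :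
    relEntropy P R =
      ((∫ z, (P.rnDeriv R z).toReal * log (P.rnDeriv R z).toReal ∂ R : ℝ) : EReal) := by
  rw [relEntropy, if_pos ⟨hac, (integrable_toReal_rnDeriv_mul_iff hac).1 hint⟩,
    ← integral_toReal_rnDeriv_mul hac]
  rfl

lemma relEntropy_withDensity {h : α → ℝ≥0∞} (hh : Measurable h) (hfin : ∀ᵐ z ∂ R, h z ≠ ∞)
    (hint : Integrable (fun z => (h z).toReal * log (h z).toReal) R) :
    relEntropy (R.withDensity h) R = ((∫ z, (h z).toReal * log (h z).toReal ∂ R : ℝ) : EReal) := by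
  have := SigmaFinite.withDensity_of_ne_top hfin
  have hrn := (Measure.rnDeriv_withDensity R hh).fun_comp fun x => x.toReal * log x.toReal
  rw [relEntropy_eq_integral_mul_log_rnDeriv (withDensity_absolutelyContinuous R h)
    (hint.congr hrn.symm)]
  exact congrArg _ (integral_congr_ae hrn)

end RelEntropy

section DominatedDensities

variable {α : Type*} [MeasurableSpace α] {P R : Measure α} {h : ℕ → α → ℝ≥0∞} {C : ℝ≥0}

lemma ae_tendsto_toReal_of_ae_tendsto_rnDeriv [SigmaFinite P]
    (hlim : ∀ᵐ z ∂ R, Tendsto (fun n => h n z) atTop (𝓝 (P.rnDeriv R z))) :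
    ∀ᵐ z ∂ R, Tendsto (fun n => (h n z).toReal) atTop (𝓝 (P.rnDeriv R z).toReal) := by
  filter_upwards [hlim, P.rnDeriv_lt_top R] with z hz hfin
  exact (ENNReal.tendsto_toReal hfin.ne).comp hz

lemma eventually_toReal_le_of_le_rnDeriv [SigmaFinite P]
    (hle : ∀ᶠ n in atTop, ∀ᵐ z ∂ R, h n z ≤ C * P.rnDeriv R z) :
    ∀ᶠ n in atTop, ∀ᵐ z ∂ R, h n z ≠ ∞ ∧ (h n z).toReal ≤ C * (P.rnDeriv R z).toReal := by
  filter_upwards [hle] with n hn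
  filter_upwards [hn, P.rnDeriv_lt_top R] with z hz hfin
  have hCρ : (C : ℝ≥0∞) * P.rnDeriv R z ≠ ∞ := ENNReal.mul_ne_top ENNReal.coe_ne_top hfin.ne
  refine ⟨ne_top_of_le_ne_top hCρ hz, ?_⟩
  simpa only [ENNReal.toReal_mul, ENNReal.coe_toReal] using ENNReal.toReal_mono hCρ hz

variable [IsFiniteMeasure P] [IsFiniteMeasure R]

theorem tendsto_integral_withDensity_of_dominated [TopologicalSpace α] [OpensMeasurableSpace α]
    (hac : P ≪ R) (hmeas : ∀ n, Measurable (h n))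
    (hlim : ∀ᵐ z ∂ R, Tendsto (fun n => h n z) atTop (𝓝 (P.rnDeriv R z)))
    (hle : ∀ᶠ n in atTop, ∀ᵐ z ∂ R, h n z ≤ C * P.rnDeriv R z) (f : α →ᵇ ℝ) :
    Tendsto (fun n => ∫ x, f x ∂ R.withDensity (h n)) atTop (𝓝 (∫ x, f x ∂ P)) := by
  have hle' := eventually_toReal_le_of_le_rnDeriv hle
  have hint : ∀ᶠ n in atTop, ∫ x, (h n x).toReal * f x ∂ R = ∫ x, f x ∂ R.withDensity (h n) := by
    filter_upwards [hle'] with n hn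
    exact (integral_withDensity_eq_integral_toReal_smul (hmeas n)
      (hn.mono fun _ hz => hz.1.lt_top) f).symm
  rw [← integral_toReal_rnDeriv_mul hac]
  refine (tendsto_integral_filter_of_dominated_convergence
    (fun z => C * (P.rnDeriv R z).toReal * ‖f‖) ?_ ?_ ?_ ?_).congr' hint
  · exact Eventually.of_forall fun n =>
      ((hmeas n).ennreal_toReal.mul f.continuous.measurable).aestronglyMeasurable
  · filter_upwards [hle'] with n hn
    filter_upwards [hn] with z hz
    rw [norm_mul, Real.norm_of_nonneg ENNReal.toReal_nonneg]
    exact mul_le_mul hz.2 (f.norm_coe_le_norm z) (norm_nonneg _) (by positivity)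
  · exact (Measure.integrable_toReal_rnDeriv.const_mul _).mul_const _
  · filter_upwards [ae_tendsto_toReal_of_ae_tendsto_rnDeriv hlim] with z hz
    exact hz.mul_const _

theorem tendsto_relEntropy_withDensity_of_dominated (hac : P ≪ R) (hP : relEntropy P R ≠ ⊤)
    (hmeas : ∀ n, Measurable (h n))
    (hlim : ∀ᵐ z ∂ R, Tendsto (fun n => h n z) atTop (𝓝 (P.rnDeriv R z)))
    (hle : ∀ᶠ n in atTop, ∀ᵐ z ∂ R, h n z ≤ C * P.rnDeriv R z) :
    Tendsto (fun n => relEntropy (R.withDensity (h n)) R) atTop (𝓝 (relEntropy P R)) := by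
  have hle' := eventually_toReal_le_of_le_rnDeriv hle
  have hρ := integrable_mul_log_rnDeriv_of_relEntropy_ne_top hP
  have hbound : Integrable (fun z => 1 + |C * (P.rnDeriv R z).toReal
      * log (C * (P.rnDeriv R z).toReal)|) R :=
    (integrable_const 1).add (Measure.integrable_toReal_rnDeriv.const_mul_mul_log hρ C).abs
  have hdom : ∀ᶠ n in atTop, ∀ᵐ z ∂ R, ‖(h n z).toReal * log (h n z).toReal‖
      ≤ 1 + |C * (P.rnDeriv R z).toReal * log (C * (P.rnDeriv R z).toReal)| := by
    filter_upwards [hle'] with n hn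
    filter_upwards [hn] with z hz
    exact Real.abs_mul_log_le_of_le ENNReal.toReal_nonneg hz.2
  have hmeas' n : AEStronglyMeasurable (fun z => (h n z).toReal * log (h n z).toReal) R :=
    (continuous_mul_log.measurable.comp (hmeas n).ennreal_toReal).aestronglyMeasurable
  have hent : ∀ᶠ n in atTop, ((∫ z, (h n z).toReal * log (h n z).toReal ∂ R : ℝ) : EReal)
      = relEntropy (R.withDensity (h n)) R := by
    filter_upwards [hle', hdom] with n hn hdn
    exact (relEntropy_withDensity (hmeas n) (hn.mono fun _ hz => hz.1)
      (hbound.mono' (hmeas' n) hdn)).symm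
  rw [relEntropy_eq_integral_mul_log_rnDeriv hac hρ]
  refine (EReal.tendsto_coe.2 (tendsto_integral_filter_of_dominated_convergence _
    (Eventually.of_forall hmeas') hdom hbound ?_)).congr' hent
  filter_upwards [ae_tendsto_toReal_of_ae_tendsto_rnDeriv hlim] with z hz
  exact (continuous_mul_log.tendsto _).comp hz

end DominatedDensities

section Truncation

variable {α : Type*} {ρ : α → ℝ≥0∞} {K : ℕ → Set α}

noncomputable def truncatedDensity (ρ : α → ℝ≥0∞) (K : ℕ → Set α) (n : ℕ) : α → ℝ≥0∞ :=
  (K n).indicator fun z => min (ρ z) n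

lemma truncatedDensity_le (n : ℕ) (z : α) : truncatedDensity ρ K n z ≤ ρ z :=
  Set.indicator_le (fun _ _ => min_le_left _ _) z

lemma measurable_truncatedDensity [MeasurableSpace α] (hρ : Measurable ρ)
    (hK : ∀ n, MeasurableSet (K n)) (n : ℕ) : Measurable (truncatedDensity ρ K n) :=
  (hρ.min measurable_const).indicator (hK n)

lemma truncatedDensity_eventually_eq (hKmono : Monotone K) (hKuniv : ⋃ n, K n = Set.univ) {z : α}
    (hz : ρ z ≠ ∞) : ∀ᶠ n in atTop, truncatedDensity ρ K n z = ρ z := by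
  obtain ⟨m, hm⟩ := Set.mem_iUnion.1 (hKuniv ▸ Set.mem_univ z)
  obtain ⟨k, hk⟩ := ENNReal.exists_nat_gt hz
  filter_upwards [eventually_ge_atTop m, eventually_ge_atTop k] with n hmn hkn
  rw [truncatedDensity, Set.indicator_of_mem (hKmono hmn hm),
    min_eq_left (hk.le.trans (Nat.cast_le.2 hkn))]

lemma tendsto_lintegral_truncatedDensity [MeasurableSpace α] {R : Measure α} (hρ : Measurable ρ)
    (hK : ∀ n, MeasurableSet (K n)) (hKmono : Monotone K) (hKuniv : ⋃ n, K n = Set.univ)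
    (hfin : ∫⁻ z, ρ z ∂ R ≠ ∞) :
    Tendsto (fun n => ∫⁻ z, truncatedDensity ρ K n z ∂ R) atTop (𝓝 (∫⁻ z, ρ z ∂ R)) := by
  refine tendsto_lintegral_of_dominated_convergence ρ (measurable_truncatedDensity hρ hK)
    (fun n => ae_of_all _ (truncatedDensity_le n)) hfin ?_
  filter_upwards [ae_lt_top hρ hfin] with z hz
  exact tendsto_nhds_of_eventually_eq (truncatedDensity_eventually_eq hKmono hKuniv hz.ne)

lemma tendsto_lintegral_truncatedDensity_rnDeriv [MeasurableSpace α] {P R : Measure α}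
    [IsProbabilityMeasure P] [SigmaFinite R] (hac : P ≪ R) (hK : ∀ n, MeasurableSet (K n))
    (hKmono : Monotone K) (hKuniv : ⋃ n, K n = Set.univ) :
    Tendsto (fun n => ∫⁻ z, truncatedDensity (P.rnDeriv R) K n z ∂ R) atTop (𝓝 1) := by
  have h := tendsto_lintegral_truncatedDensity (P.measurable_rnDeriv R) hK hKmono hKuniv
    (Measure.lintegral_rnDeriv_lt_top P R).ne
  rwa [Measure.lintegral_rnDeriv hac, measure_univ] at h

variable {c : ℕ → ℝ≥0∞}

lemma tendsto_inv_mul_truncatedDensity (hKmono : Monotone K) (hKuniv : ⋃ n, K n = Set.univ)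
    (hc : Tendsto c atTop (𝓝 1)) {z : α} (hz : ρ z ≠ ∞) :
    Tendsto (fun n => (c n)⁻¹ * truncatedDensity ρ K n z) atTop (𝓝 (ρ z)) := by
  have h := ENNReal.Tendsto.mul_const hc.inv (Or.inr hz)
  rw [inv_one, one_mul] at h
  refine h.congr' ?_
  filter_upwards [truncatedDensity_eventually_eq hKmono hKuniv hz] with n hn
  rw [hn]

lemma eventually_inv_mul_truncatedDensity_le (hc : Tendsto c atTop (𝓝 1)) :
    ∀ᶠ n in atTop, ∀ z, (c n)⁻¹ * truncatedDensity ρ K n z ≤ (2 : ℝ≥0) * ρ z := by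
  have hinv := hc.inv
  rw [inv_one] at hinv
  filter_upwards [hinv.eventually (gt_mem_nhds ENNReal.one_lt_two)] with n hn z
  exact mul_le_mul' (by exact_mod_cast hn.le) (truncatedDensity_le n z)

end Truncation

theorem truncation_approximation_general
    (N : ℕ)
    (R P : Measure (EuclideanSpace ℝ (Fin N)))
    [IsProbabilityMeasure R] [IsProbabilityMeasure P]
    (hac : P ≪ R) (hfin : relEntropy P R ≠ ⊤)
    (K : ℕ → Set (EuclideanSpace ℝ (Fin N)))
    (hKcp : ∀ n, IsCompact (K n)) (hKmono : Monotone K) (hKuniv : ⋃ n, K n = Set.univ)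
    (Cn : ℕ → ℝ≥0∞)
    (hCn : ∀ n, Cn n = ∫⁻ z in K n, min (P.rnDeriv R z) (n : ℝ≥0∞) ∂ R)
    (q : ℕ → Measure (EuclideanSpace ℝ (Fin N)))
    (hq : ∀ n, q n = (Cn n)⁻¹ •
      R.withDensity ((K n).indicator (fun z => min (P.rnDeriv R z) (n : ℝ≥0∞)))) :
    Tendsto Cn atTop (𝓝 1) ∧
    (∀ n, 0 < Cn n → IsProbabilityMeasure (q n)) ∧
    (∀ f : BoundedContinuousFunction (EuclideanSpace ℝ (Fin N)) ℝ,
      Tendsto (fun n => ∫ x, f x ∂(q n)) (atTop ⊓ 𝓟 {n | 0 < Cn n})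
        (𝓝 (∫ x, f x ∂P))) ∧
    Tendsto (fun n => relEntropy (q n) R) (atTop ⊓ 𝓟 {n | 0 < Cn n})
      (𝓝 (relEntropy P R)) := by
  set g := truncatedDensity (P.rnDeriv R) K
  have hK n : MeasurableSet (K n) := (hKcp n).measurableSet
  have hg := measurable_truncatedDensity (P.measurable_rnDeriv R) hK
  have hCn' n : Cn n = ∫⁻ z, g n z ∂ R := by
    rw [hCn, ← lintegral_indicator (hK n)]
    rfl
  have hq' n : q n = R.withDensity fun z => (Cn n)⁻¹ * g n z := by
    rw [hq]
    exact (withDensity_smul _ (hg n)).symm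
  have hC : Tendsto Cn atTop (𝓝 1) :=
    (tendsto_lintegral_truncatedDensity_rnDeriv hac hK hKmono hKuniv).congr fun n => (hCn' n).symm
  have hC_ne_top n : Cn n ≠ ∞ := ne_top_of_le_ne_top (Measure.lintegral_rnDeriv_lt_top P R).ne
    (hCn' n ▸ lintegral_mono (truncatedDensity_le n))
  have hmeas n : Measurable fun z => (Cn n)⁻¹ * g n z := (hg n).const_mul _
  have hlim : ∀ᵐ z ∂ R, Tendsto (fun n => (Cn n)⁻¹ * g n z) atTop (𝓝 (P.rnDeriv R z)) := by
    filter_upwards [P.rnDeriv_lt_top R] with z hz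
    exact tendsto_inv_mul_truncatedDensity hKmono hKuniv hC hz.ne
  have hle : ∀ᶠ n in atTop, ∀ᵐ z ∂ R, (Cn n)⁻¹ * g n z ≤ (2 : ℝ≥0) * P.rnDeriv R z :=
    (eventually_inv_mul_truncatedDensity_le hC).mono fun n hn => ae_of_all R hn
  refine ⟨hC, fun n hn => ⟨?_⟩, fun f => ?_, ?_⟩
  · rw [hq', withDensity_apply _ .univ, Measure.restrict_univ, lintegral_const_mul _ (hg n),
      ← hCn', ENNReal.inv_mul_cancel hn.ne' (hC_ne_top n)]
  · simp only [hq']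
    exact (tendsto_integral_withDensity_of_dominated hac hmeas hlim hle f).mono_left inf_le_left
  · simp only [hq']
    exact (tendsto_relEntropy_withDensity_of_dominated hac hfin hmeas hlim hle).mono_left
      inf_le_left

/-- truncation approximation of a finite-entropy measure by measures with
bounded, compactly supported densities, with convergence of relative entropies. -/
theorem truncation_approximation
    (N : ℕ) (hN : 1 ≤ N)
    (R P : Measure (EuclideanSpace ℝ (Fin N)))
    [IsProbabilityMeasure R] [IsProbabilityMeasure P]
    (hac : P ≪ R) (hfin : relEntropy P R ≠ ⊤)
    (K : ℕ → Set (EuclideanSpace ℝ (Fin N)))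
    (hKcp : ∀ n, IsCompact (K n)) (hKmono : Monotone K) (hKuniv : ⋃ n, K n = Set.univ)
    (Cn : ℕ → ℝ≥0∞)
    (hCn : ∀ n, Cn n = ∫⁻ z in K n, min (P.rnDeriv R z) (n : ℝ≥0∞) ∂ R)
    (q : ℕ → Measure (EuclideanSpace ℝ (Fin N)))
    (hq : ∀ n, q n = (Cn n)⁻¹ •
      R.withDensity ((K n).indicator (fun z => min (P.rnDeriv R z) (n : ℝ≥0∞)))) :
    Tendsto Cn atTop (𝓝 1) ∧
    (∀ n, 0 < Cn n → IsProbabilityMeasure (q n)) ∧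
    (∀ f : BoundedContinuousFunction (EuclideanSpace ℝ (Fin N)) ℝ,
      Tendsto (fun n => ∫ x, f x ∂(q n)) (atTop ⊓ 𝓟 {n | 0 < Cn n})
        (𝓝 (∫ x, f x ∂P))) ∧
    Tendsto (fun n => relEntropy (q n) R) (atTop ⊓ 𝓟 {n | 0 < Cn n})
      (𝓝 (relEntropy P R)) :=
  truncation_approximation_general N R P hac hfin K hKcp hKmono hKuniv Cn hCn q hq
end

section
/- Let N ≥ 1 and let R_∞ be a Borel probability measure on ℝ^N. Let q be a Borel probability measure with q ≪ R_∞, H(q|R_∞) < ∞ and ∫ |z|² dq(z) < ∞. Suppose (R_n) is a sequence of Borel probability measures of the form R_n = r_n · R_∞ with Borel densities r_n > 0 satisfying: (i) there is a constant c > 0 such that log r_n(z) ≥ −c(1 + |z|²) for all n and all z; (ii) liminf_{n→∞} log r_n(z) ≥ 0 for R_∞-almost every z. Then limsup_{n→∞} H(q|R_n) ≤ H(q|R_∞). -/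
open MeasureTheory Filter Topology

/-!
Since `dq/dRₙ = (dq/dR∞) / rₙ`, we have `H(q|Rₙ) = H(q|R∞) - ∫ log rₙ dq`. Here `log rₙ` is
`q`-integrable: it is bounded below by `-c(1 + |z|²)`, and its positive part is controlled by the
entropy inequality `s t ≤ s log s + eᵗ` with `s = dq/dR∞`. It therefore suffices that
`liminf ∫ log rₙ dq ≥ 0`, which is Fatou's lemma for the nonnegative functions
`log rₙ + c(1 + |z|²)`.
-/

open Real

lemma Real.mul_le_mul_log_add_exp {s : ℝ} (hs : 0 ≤ s) (t : ℝ) : s * t ≤ s * log s + exp t := by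
  rcases hs.eq_or_lt with rfl | hs
  · simpa using (exp_pos t).le
  · have h := mul_le_mul_of_nonneg_left (add_one_le_exp (t - log s)) hs.le
    rw [exp_sub, exp_log hs, mul_div_cancel₀ _ hs.ne'] at h
    linarith

lemma Real.exp_max_log_zero_le (x : ℝ) : exp (max (log x) 0) ≤ |x| + 1 := by
  rcases eq_or_ne x 0 with rfl | hx
  · simp
  · rw [max_def]
    split_ifs
    · rw [exp_zero]; linarith [abs_nonneg x]
    · rw [exp_log_eq_abs hx]; linarith

lemma ofReal_le_liminf_ofReal_add_iff {ι : Type*} {l : Filter ι} {u : ι → ℝ} {b : ℝ}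
    (hub : ∀ i, 0 ≤ u i + b) :
    ENNReal.ofReal b ≤ liminf (fun i => ENNReal.ofReal (u i + b)) l ↔
      0 ≤ liminf (fun i => (u i : EReal)) l := by
  constructor
  · intro h
    by_contra! hneg
    obtain ⟨r, hr, hr0⟩ := EReal.exists_between_coe_real hneg
    have hfreq : ∃ᶠ i in l, u i < r := by
      simpa using frequently_lt_of_liminf_lt (by isBoundedDefault) hr
    obtain ⟨i, hi⟩ := hfreq.exists
    have hb : 0 < b := by linarith [hub i, EReal.coe_lt_coe_iff.1 hr0]
    have : liminf (fun i => ENNReal.ofReal (u i + b)) l ≤ ENNReal.ofReal (r + b) :=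
      liminf_le_of_frequently_le' (hfreq.mono fun i hi => ENNReal.ofReal_le_ofReal (by linarith))
    refine (h.trans this).not_gt ((ENNReal.ofReal_lt_ofReal_iff hb).2 ?_)
    linarith [EReal.coe_lt_coe_iff.1 hr0]
  · intro h
    refine (le_liminf_iff (by isBoundedDefault) (by isBoundedDefault)).2 fun y hy => ?_
    have hy_top : y ≠ ⊤ := hy.ne_top
    rw [ENNReal.lt_ofReal_iff_toReal_lt hy_top] at hy
    have hε : ((y.toReal - b : ℝ) : EReal) < liminf (fun i => (u i : EReal)) l :=
      lt_of_lt_of_le (EReal.coe_lt_coe_iff.2 (by linarith)) h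
    filter_upwards [eventually_lt_of_lt_liminf hε] with i hi
    rw [ENNReal.lt_ofReal_iff_toReal_lt hy_top]
    linarith [EReal.coe_lt_coe_iff.1 hi]

lemma limsup_coe_sub_le {ι : Type*} {l : Filter ι} {a : ι → ℝ} (H : ℝ)
    (ha : 0 ≤ liminf (fun i => (a i : EReal)) l) :
    limsup (fun i => ((H - a i : ℝ) : EReal)) l ≤ H := by
  refine EReal.le_of_forall_lt_iff_le.1 fun z hz => limsup_le_of_le (by isBoundedDefault) ?_
  have hHz : ((H - z : ℝ) : EReal) < liminf (fun i => (a i : EReal)) l :=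
    lt_of_lt_of_le (EReal.coe_lt_coe_iff.2 (by linarith [EReal.coe_lt_coe_iff.1 hz])) ha
  filter_upwards [eventually_lt_of_lt_liminf hHz] with i hi
  exact EReal.coe_le_coe_iff.2 (by linarith [EReal.coe_lt_coe_iff.1 hi])

section

variable {α : Type*} [MeasurableSpace α] {μ ν : Measure α}

lemma relEntropy_of_ac_of_integrable (hμν : μ ≪ ν) (h_int : Integrable (llr μ ν) μ) :
    relEntropy μ ν = ((∫ x, llr μ ν x ∂μ : ℝ) : EReal) := by
  rw [relEntropy, if_pos ⟨hμν, h_int⟩]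

lemma integrable_llr_of_relEntropy_ne_top (h : relEntropy μ ν ≠ ⊤) : Integrable (llr μ ν) μ := by
  by_contra h_int
  exact h (by rw [relEntropy, if_neg fun h' => h_int h'.2])

lemma integrable_max_log_zero_of_integrable_llr [SigmaFinite μ] [IsFiniteMeasure ν]
    (hμν : μ ≪ ν) (h_int : Integrable (llr μ ν) μ) {r : α → ℝ} (hr : Measurable r)
    (hrν : Integrable r ν) : Integrable (fun x => max (log (r x)) 0) μ := by
  rw [← integrable_rnDeriv_smul_iff hμν]
  have hmul_log := (integrable_rnDeriv_mul_log_iff hμν).2 h_int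
  refine (hmul_log.abs.add (hrν.abs.add (integrable_const 1))).mono' ?_ (ae_of_all _ fun x => ?_)
  · exact ((μ.measurable_rnDeriv ν).ennreal_toReal.mul
      ((measurable_log.comp hr).max measurable_const)).aestronglyMeasurable
  · set s := (μ.rnDeriv ν x).toReal
    have hs : 0 ≤ s := ENNReal.toReal_nonneg
    rw [smul_eq_mul, norm_of_nonneg (mul_nonneg hs (le_max_right _ _))]
    calc s * max (log (r x)) 0 ≤ s * log s + exp (max (log (r x)) 0) :=
          mul_le_mul_log_add_exp hs _
      _ ≤ |s * log s| + (|r x| + 1) := add_le_add (le_abs_self _) (exp_max_log_zero_le _)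

lemma integrable_log_of_neg_le [SigmaFinite μ] [IsFiniteMeasure ν]
    (hμν : μ ≪ ν) (h_int : Integrable (llr μ ν) μ) {r g : α → ℝ} (hr : Measurable r)
    (hrν : Integrable r ν) (hg : Integrable g μ) (hgr : ∀ᵐ x ∂μ, -g x ≤ log (r x)) :
    Integrable (fun x => log (r x)) μ := by
  refine ((integrable_max_log_zero_of_integrable_llr hμν h_int hr hrν).add hg.abs).mono'
    (measurable_log.comp hr).aestronglyMeasurable ?_
  filter_upwards [hgr] with x hx
  rw [norm_eq_abs, abs_le, Pi.add_apply]
  constructor <;> linarith [le_max_left (log (r x)) 0, le_max_right (log (r x)) 0, neg_abs_le (g x),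
    le_abs_self (g x)]

lemma integrable_of_isFiniteMeasure_withDensity_ofReal {r : α → ℝ}
    [IsFiniteMeasure (ν.withDensity fun x => ENNReal.ofReal (r x))] (hr : AEStronglyMeasurable r ν)
    (hr_nonneg : 0 ≤ᵐ[ν] r) : Integrable r ν := by
  refine ⟨hr, (hasFiniteIntegral_iff_ofReal hr_nonneg).2 ?_⟩
  rw [← setLIntegral_univ, ← withDensity_apply _ MeasurableSet.univ]
  exact measure_lt_top _ _

lemma integral_eq_one_of_isProbabilityMeasure_withDensity_ofReal {r : α → ℝ}
    [IsProbabilityMeasure (ν.withDensity fun x => ENNReal.ofReal (r x))]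
    (hr : AEStronglyMeasurable r ν) (hr_nonneg : 0 ≤ᵐ[ν] r) : ∫ x, r x ∂ν = 1 := by
  rw [integral_eq_lintegral_of_nonneg_ae hr_nonneg hr, ← setLIntegral_univ,
    ← withDensity_apply _ MeasurableSet.univ, measure_univ, ENNReal.toReal_one]

lemma withDensity_ofReal_eq_tilted_log {r : α → ℝ} (hr_pos : ∀ x, 0 < r x)
    (h_one : ∫ x, r x ∂ν = 1) :
    ν.withDensity (fun x => ENNReal.ofReal (r x)) = ν.tilted (fun x => log (r x)) := by
  simp only [Measure.tilted, exp_log (hr_pos _), h_one, div_one]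

lemma relEntropy_withDensity_right [IsProbabilityMeasure μ] [SigmaFinite ν] {r : α → ℝ}
    (hr : Measurable r) (hr_pos : ∀ x, 0 < r x)
    [IsProbabilityMeasure (ν.withDensity fun x => ENNReal.ofReal (r x))]
    (hμν : μ ≪ ν) (h_int : Integrable (llr μ ν) μ) (hlog : Integrable (fun x => log (r x)) μ) :
    relEntropy μ (ν.withDensity fun x => ENNReal.ofReal (r x))
      = ((∫ x, llr μ ν x ∂μ - ∫ x, log (r x) ∂μ : ℝ) : EReal) := by
  have hr_nonneg : 0 ≤ᵐ[ν] r := ae_of_all _ fun x => (hr_pos x).le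
  have h_one := integral_eq_one_of_isProbabilityMeasure_withDensity_ofReal
    hr.aestronglyMeasurable hr_nonneg
  have hexp : Integrable (fun x => exp (log (r x))) ν := by
    simpa only [exp_log (hr_pos _)] using
      integrable_of_isFiniteMeasure_withDensity_ofReal hr.aestronglyMeasurable hr_nonneg
  rw [withDensity_ofReal_eq_tilted_log hr_pos h_one,
    relEntropy_of_ac_of_integrable (hμν.trans (absolutelyContinuous_tilted hexp))
      (integrable_llr_tilted_right hμν hlog h_int hexp),
    integral_llr_tilted_right hμν hlog hexp h_int]
  simp [exp_log (hr_pos _), h_one]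

lemma le_liminf_integral_of_neg_le {f : ℕ → α → ℝ} {g : α → ℝ} (hf : ∀ n, Integrable (f n) μ)
    (hg : Integrable g μ) (hgf : ∀ n, ∀ᵐ x ∂μ, -g x ≤ f n x)
    (hlim : ∀ᵐ x ∂μ, 0 ≤ liminf (fun n => (f n x : EReal)) atTop) :
    0 ≤ liminf (fun n => ((∫ x, f n x ∂μ : ℝ) : EReal)) atTop := by
  -- replacing `g` by its positive part, `f n + g` becomes a nonnegative sequence for Fatou
  set G : α → ℝ := fun x => max (g x) 0
  have hG : Integrable G μ := hg.sup (integrable_zero _ _ μ)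
  have hGf : ∀ᵐ x ∂μ, ∀ n, 0 ≤ f n x + G x := by
    filter_upwards [ae_all_iff.2 hgf] with x hx n
    linarith [hx n, le_max_left (g x) 0]
  have hint_nonneg : ∀ n, 0 ≤ ∫ x, f n x ∂μ + ∫ x, G x ∂μ := fun n => by
    rw [← integral_add (hf n) hG]
    exact integral_nonneg_of_ae (hGf.mono fun x hx => hx n)
  rw [← ofReal_le_liminf_ofReal_add_iff hint_nonneg]
  calc ENNReal.ofReal (∫ x, G x ∂μ) = ∫⁻ x, ENNReal.ofReal (G x) ∂μ :=
        ofReal_integral_eq_lintegral_ofReal hG (ae_of_all _ fun x => le_max_right _ _)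
    _ ≤ ∫⁻ x, liminf (fun n => ENNReal.ofReal (f n x + G x)) atTop ∂μ := by
        refine lintegral_mono_ae ?_
        filter_upwards [hlim, hGf] with x hx hx'
        exact (ofReal_le_liminf_ofReal_add_iff hx').2 hx
    _ ≤ liminf (fun n => ∫⁻ x, ENNReal.ofReal (f n x + G x) ∂μ) atTop :=
        lintegral_liminf_le' fun n => ((hf n).add hG).aemeasurable.ennreal_ofReal
    _ = liminf (fun n => ENNReal.ofReal (∫ x, f n x ∂μ + ∫ x, G x ∂μ)) atTop := by
        congr with n
        rw [← integral_add (hf n) hG]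
        exact (ofReal_integral_eq_lintegral_ofReal ((hf n).add hG)
          (hGf.mono fun x hx => hx n)).symm

end

theorem relEntropy_gamma_limsup_general
    (N : ℕ)
    (Rinf : Measure (EuclideanSpace ℝ (Fin N))) [IsProbabilityMeasure Rinf]
    (q : Measure (EuclideanSpace ℝ (Fin N))) [IsProbabilityMeasure q]
    (hac : q ≪ Rinf) (hfin : relEntropy q Rinf ≠ ⊤)
    (hmom : Integrable (fun z => ‖z‖ ^ 2) q)
    (rn : ℕ → EuclideanSpace ℝ (Fin N) → ℝ)
    (hrn_meas : ∀ n, Measurable (rn n))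
    (hrn_pos : ∀ n z, 0 < rn n z)
    (Rn : ℕ → Measure (EuclideanSpace ℝ (Fin N)))
    (hRn : ∀ n, Rn n = Rinf.withDensity (fun z => ENNReal.ofReal (rn n z)))
    (hRn_prob : ∀ n, IsProbabilityMeasure (Rn n))
    (c : ℝ)
    (hlow : ∀ n z, -(c * (1 + ‖z‖ ^ 2)) ≤ Real.log (rn n z))
    (hliminf : ∀ᵐ z ∂ Rinf,
      (0 : EReal) ≤ liminf (fun n => ((Real.log (rn n z) : ℝ) : EReal)) atTop) :
    limsup (fun n => relEntropy q (Rn n)) atTop ≤ relEntropy q Rinf := by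
  have hllr := integrable_llr_of_relEntropy_ne_top hfin
  have hprob (n : ℕ) : IsProbabilityMeasure (Rinf.withDensity fun z => ENNReal.ofReal (rn n z)) :=
    hRn n ▸ hRn_prob n
  have hφ : Integrable (fun z => c * (1 + ‖z‖ ^ 2)) q :=
    ((integrable_const 1).add hmom).const_mul c
  have hlog (n : ℕ) : Integrable (fun z => log (rn n z)) q :=
    integrable_log_of_neg_le hac hllr (hrn_meas n)
      (integrable_of_isFiniteMeasure_withDensity_ofReal (hrn_meas n).aestronglyMeasurable
        (ae_of_all _ fun z => (hrn_pos n z).le)) hφ (ae_of_all _ (hlow n))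
  have hRE (n : ℕ) : relEntropy q (Rn n)
      = ((∫ z, llr q Rinf z ∂q - ∫ z, log (rn n z) ∂q : ℝ) : EReal) := by
    rw [hRn n]
    exact relEntropy_withDensity_right (hrn_meas n) (hrn_pos n) hac hllr (hlog n)
  rw [funext hRE, relEntropy_of_ac_of_integrable hac hllr]
  exact limsup_coe_sub_le _ (le_liminf_integral_of_neg_le hlog hφ
    (fun n => ae_of_all _ (hlow n)) (hac.ae_le hliminf))

/-- Γ-limsup inequality: under a uniform Gaussian-type lower bound on the
densities and a.e. asymptotic nonnegativity of their logarithms, the relative entropies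
with respect to the tilted measures are asymptotically bounded by `H(q|R_∞)`. -/
theorem relEntropy_gamma_limsup
    (N : ℕ) (hN : 1 ≤ N)
    (Rinf : Measure (EuclideanSpace ℝ (Fin N))) [IsProbabilityMeasure Rinf]
    (q : Measure (EuclideanSpace ℝ (Fin N))) [IsProbabilityMeasure q]
    (hac : q ≪ Rinf) (hfin : relEntropy q Rinf ≠ ⊤)
    (hmom : Integrable (fun z => ‖z‖ ^ 2) q)
    (rn : ℕ → EuclideanSpace ℝ (Fin N) → ℝ)
    (hrn_meas : ∀ n, Measurable (rn n))
    (hrn_pos : ∀ n z, 0 < rn n z)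
    (Rn : ℕ → Measure (EuclideanSpace ℝ (Fin N)))
    (hRn : ∀ n, Rn n = Rinf.withDensity (fun z => ENNReal.ofReal (rn n z)))
    (hRn_prob : ∀ n, IsProbabilityMeasure (Rn n))
    (c : ℝ) (hc : 0 < c)
    (hlow : ∀ n z, -(c * (1 + ‖z‖ ^ 2)) ≤ Real.log (rn n z))
    (hliminf : ∀ᵐ z ∂ Rinf,
      (0 : EReal) ≤ liminf (fun n => ((Real.log (rn n z) : ℝ) : EReal)) atTop) :
    limsup (fun n => relEntropy q (Rn n)) atTop ≤ relEntropy q Rinf :=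
  relEntropy_gamma_limsup_general N Rinf q hac hfin hmom rn hrn_meas hrn_pos Rn hRn hRn_prob c hlow
    hliminf
end

section
/- Let d ≥ 1, γ > 0 and 0 < α < β be real numbers with √β − √α < γ. Then there exist a symmetric positive definite matrix Q ∈ ℝ^{2d×2d} and a constant κ > 0 such that for every symmetric matrix H ∈ ℝ^{d×d} with α·Id ≤ H ≤ β·Id in the Loewner order, and for every ξ ∈ ℝ^{2d}, one has ⟨ξ, J Q ξ⟩ ≤ −κ ⟨ξ, Q ξ⟩, where J ∈ ℝ^{2d×2d} is the block matrix with blocks J₁₁ = 0, J₁₂ = Id, J₂₁ = −H, J₂₂ = −γ·Id. -/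
/-!
Take `Q = [[2, -γ], [-γ, α + B]] ⊗ Id` for a suitable `B ≥ β`. The defect
`-(⟨ξ, J Q ξ⟩ + κ ⟨ξ, Q ξ⟩)` is affine in `H`, and with `c = √(2(α + B) - γ²)` and
`2κc = γc - (B - α)` it is an S-procedure certificate: `c` times the defect equals
`⟨y₁, (H - α) y₁⟩ + ⟨y₂, (B - H) y₂⟩` for `y₁ = x + (c - γ)/2 · v`, `y₂ = x - (c + γ)/2 · v`.
The rate `κ` is positive exactly when `√B - √α < γ < √B + √α`; one takes `B = β` if
`γ² ≤ α + β` and `B = γ² - α` otherwise.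
-/

open Matrix

section

variable {n : Type*} [Fintype n]

theorem Matrix.IsSymm.dotProduct_mulVec_comm {R : Type*} [CommSemiring R] {M : Matrix n n R}
    (hM : M.IsSymm) (x v : n → R) : v ⬝ᵥ (M *ᵥ x) = x ⬝ᵥ (M *ᵥ v) := by
  rw [dotProduct_mulVec, ← mulVec_transpose, hM.eq, dotProduct_comm]

theorem Matrix.IsSymm.add_smul_dotProduct_mulVec {R : Type*} [CommSemiring R]
    {M : Matrix n n R} (hM : M.IsSymm) (x v : n → R) (t : R) :
    (x + t • v) ⬝ᵥ (M *ᵥ (x + t • v)) =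
      x ⬝ᵥ (M *ᵥ x) + 2 * t * (x ⬝ᵥ (M *ᵥ v)) + t ^ 2 * (v ⬝ᵥ (M *ᵥ v)) := by
  simp only [mulVec_add, mulVec_smul, dotProduct_add, add_dotProduct, dotProduct_smul,
    smul_dotProduct, smul_eq_mul, hM.dotProduct_mulVec_comm x v]
  ring

theorem Matrix.sumElim_dotProduct_fromBlocks_mulVec {R : Type*} [NonUnitalNonAssocSemiring R]
    (A B C D : Matrix n n R) (x v : n → R) :
    Sum.elim x v ⬝ᵥ (fromBlocks A B C D *ᵥ Sum.elim x v) =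
      x ⬝ᵥ (A *ᵥ x) + x ⬝ᵥ (B *ᵥ v) + v ⬝ᵥ (C *ᵥ x) + v ⬝ᵥ (D *ᵥ v) := by
  simp only [fromBlocks_mulVec, sumElim_dotProduct_sumElim, Sum.elim_comp_inl, Sum.elim_comp_inr,
    dotProduct_add, add_assoc]

namespace KineticLangevin

variable [DecidableEq n]

def jacobian (H : Matrix n n ℝ) (γ : ℝ) : Matrix (n ⊕ n) (n ⊕ n) ℝ :=
  fromBlocks 0 1 (-H) (-(γ • 1))

def metric (γ s : ℝ) : Matrix (n ⊕ n) (n ⊕ n) ℝ :=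
  fromBlocks ((2 : ℝ) • 1) (-γ • 1) (-γ • 1) (s • 1)

omit [Fintype n] in
theorem isSymm_metric (γ s : ℝ) : (metric γ s : Matrix (n ⊕ n) (n ⊕ n) ℝ).IsSymm := by
  simp [metric, IsSymm, fromBlocks_transpose]

theorem sumElim_dotProduct_metric_mulVec (γ s : ℝ) (x v : n → ℝ) :
    Sum.elim x v ⬝ᵥ (metric γ s *ᵥ Sum.elim x v) =
      2 * (x ⬝ᵥ x) - 2 * γ * (x ⬝ᵥ v) + s * (v ⬝ᵥ v) := by
  simp only [metric, sumElim_dotProduct_fromBlocks_mulVec, smul_mulVec, one_mulVec,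
    dotProduct_smul, smul_eq_mul, dotProduct_comm v x]
  ring

theorem sumElim_dotProduct_jacobian_mul_metric_mulVec {H : Matrix n n ℝ} (hH : H.IsSymm)
    (γ s : ℝ) (x v : n → ℝ) :
    Sum.elim x v ⬝ᵥ ((jacobian H γ * metric γ s) *ᵥ Sum.elim x v) =
      -γ * (x ⬝ᵥ x) + (s + γ ^ 2) * (x ⬝ᵥ v) - 2 * (x ⬝ᵥ (H *ᵥ v)) + γ * (v ⬝ᵥ (H *ᵥ v))
        - γ * s * (v ⬝ᵥ v) := by
  simp only [jacobian, metric, fromBlocks_multiply, sumElim_dotProduct_fromBlocks_mulVec]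
  simp only [Algebra.mul_smul_comm, mul_one, smul_zero, neg_smul, mul_neg, zero_add, neg_mulVec,
    smul_mulVec, one_mulVec, dotProduct_neg, dotProduct_smul, smul_eq_mul, neg_zero, smul_neg,
    neg_neg, add_mulVec, dotProduct_add, hH.dotProduct_mulVec_comm x v, dotProduct_comm v x,
    neg_mul, sub_eq_add_neg]
  ring

theorem posDef_metric {γ s : ℝ} (h : γ ^ 2 < 2 * s) :
    (metric γ s : Matrix (n ⊕ n) (n ⊕ n) ℝ).PosDef := by
  refine posDef_iff_dotProduct_mulVec.2 ⟨isHermitian_iff_isSymm.2 (isSymm_metric γ s), ?_⟩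
  intro ξ hξ
  obtain ⟨x, v, rfl⟩ : ∃ x v, ξ = Sum.elim x v := ⟨_, _, (Sum.elim_comp_inl_inr ξ).symm⟩
  have hsq : 2 * (x ⬝ᵥ x) - 2 * γ * (x ⬝ᵥ v) + s * (v ⬝ᵥ v) =
      2 * ((x - (γ / 2) • v) ⬝ᵥ (x - (γ / 2) • v)) + (s - γ ^ 2 / 2) * (v ⬝ᵥ v) := by
    simp only [sub_dotProduct, dotProduct_sub, smul_dotProduct, dotProduct_smul, smul_eq_mul,
      dotProduct_comm v x]
    ring
  rw [star_trivial, sumElim_dotProduct_metric_mulVec, hsq]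
  have hw : 0 ≤ (x - (γ / 2) • v) ⬝ᵥ (x - (γ / 2) • v) := by
    simpa using dotProduct_self_star_nonneg (x - (γ / 2) • v)
  by_cases hv : v = 0
  · have hx : x ≠ 0 := by rintro rfl; exact hξ (by rw [hv, Sum.elim_zero_zero])
    have : 0 < x ⬝ᵥ x := by simpa using dotProduct_self_star_pos_iff.2 hx
    simp only [hv, smul_zero, sub_zero, dotProduct_zero, mul_zero, add_zero]
    positivity
  · have : 0 < v ⬝ᵥ v := by simpa using dotProduct_self_star_pos_iff.2 hv
    have : 0 < s - γ ^ 2 / 2 := by linarith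
    positivity

theorem mul_contractionDefect_eq {H : Matrix n n ℝ} (hH : H.IsSymm) {α B γ c κ : ℝ}
    (hc : c ^ 2 = 2 * (α + B) - γ ^ 2) (hκ : 2 * κ * c = γ * c - (B - α)) (x v : n → ℝ) :
    c * -(Sum.elim x v ⬝ᵥ ((jacobian H γ * metric γ (α + B)) *ᵥ Sum.elim x v)
        + κ * (Sum.elim x v ⬝ᵥ (metric γ (α + B) *ᵥ Sum.elim x v))) =
      (x + ((c - γ) / 2) • v) ⬝ᵥ ((H - α • 1) *ᵥ (x + ((c - γ) / 2) • v)) +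
      (x - ((c + γ) / 2) • v) ⬝ᵥ ((B • 1 - H) *ᵥ (x - ((c + γ) / 2) • v)) := by
  rw [sumElim_dotProduct_jacobian_mul_metric_mulVec hH, sumElim_dotProduct_metric_mulVec,
    sub_eq_add_neg x, ← neg_smul, (hH.sub (isSymm_one.smul α)).add_smul_dotProduct_mulVec,
    ((isSymm_one.smul B).sub hH).add_smul_dotProduct_mulVec]
  simp only [sub_mulVec, smul_mulVec, one_mulVec, dotProduct_sub, dotProduct_smul, smul_eq_mul]
  linear_combination (-(2 * (x ⬝ᵥ x) - 2 * γ * (x ⬝ᵥ v) + (α + B) * (v ⬝ᵥ v)) / 2) * hκ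
    - ((B - α) * (v ⬝ᵥ v) / 4) * hc

theorem dotProduct_jacobian_mul_metric_mulVec_le {H : Matrix n n ℝ} {α B γ c κ : ℝ}
    (hc₀ : 0 < c) (hc : c ^ 2 = 2 * (α + B) - γ ^ 2) (hκ : 2 * κ * c = γ * c - (B - α))
    (hα : (H - α • 1).PosSemidef) (hB : (B • 1 - H).PosSemidef) (ξ : n ⊕ n → ℝ) :
    ξ ⬝ᵥ ((jacobian H γ * metric γ (α + B)) *ᵥ ξ) ≤ -κ * (ξ ⬝ᵥ (metric γ (α + B) *ᵥ ξ)) := by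
  have hH : H.IsSymm := by
    simpa using (isHermitian_iff_isSymm.1 hα.isHermitian).add (isSymm_one.smul α)
  obtain ⟨x, v, rfl⟩ : ∃ x v, ξ = Sum.elim x v := ⟨_, _, (Sum.elim_comp_inl_inr ξ).symm⟩
  have key := mul_contractionDefect_eq hH hc hκ x v
  have h₁ := hα.dotProduct_mulVec_nonneg (x + ((c - γ) / 2) • v)
  have h₂ := hB.dotProduct_mulVec_nonneg (x - ((c + γ) / 2) • v)
  rw [star_trivial] at h₁ h₂
  nlinarith

theorem exists_contraction_rate {α B γ : ℝ} (hγ : 0 < γ)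
    (hgap : (B - α) ^ 2 < γ ^ 2 * (2 * (α + B) - γ ^ 2)) :
    ∃ c κ : ℝ, 0 < c ∧ c ^ 2 = 2 * (α + B) - γ ^ 2 ∧ 0 < κ ∧ 2 * κ * c = γ * c - (B - α) := by
  have hpos : 0 < 2 * (α + B) - γ ^ 2 := by nlinarith
  set c := √(2 * (α + B) - γ ^ 2)
  have hc₀ : 0 < c := Real.sqrt_pos.2 hpos
  have hc : c ^ 2 = 2 * (α + B) - γ ^ 2 := Real.sq_sqrt hpos.le
  have hlt : (B - α) / c < γ := by
    rw [div_lt_iff₀ hc₀]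
    refine lt_of_pow_lt_pow_left₀ 2 (by positivity) ?_
    rw [mul_pow, hc]
    exact hgap
  exact ⟨c, (γ - (B - α) / c) / 2, hc₀, hc, by linarith, by field_simp⟩

theorem exists_upper_bound_of_sqrt_sub_sqrt_lt {γ α β : ℝ} (hα : 0 < α) (hαβ : α < β)
    (hgap : √β - √α < γ) :
    ∃ B, β ≤ B ∧ (B - α) ^ 2 < γ ^ 2 * (2 * (α + B) - γ ^ 2) := by
  rcases le_or_gt (γ ^ 2) (α + β) with h | h
  · refine ⟨β, le_rfl, ?_⟩
    have hp := Real.sq_sqrt hα.le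
    have hq := Real.sq_sqrt (hα.trans hαβ).le
    have hp₀ := Real.sqrt_pos.2 hα
    have hpq := Real.sqrt_lt_sqrt hα.le hαβ
    have h₁ : (√β - √α) ^ 2 < γ ^ 2 := by nlinarith
    have h₂ : γ ^ 2 < (√β + √α) ^ 2 := by nlinarith
    -- the gap factors as `(γ² - (√β - √α)²) ((√β + √α)² - γ²)`
    nlinarith [mul_pos (sub_pos.2 h₁) (sub_pos.2 h₂)]
  · exact ⟨γ ^ 2 - α, by linarith, by nlinarith⟩

end KineticLangevin

end

open KineticLangevin in
theorem langevin_contraction_matrix_general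
    (d : ℕ) (γ α β : ℝ)
    (hγ : 0 < γ) (hα : 0 < α) (hαβ : α < β)
    (hgap : Real.sqrt β - Real.sqrt α < γ) :
    ∃ (Q : Matrix (Fin d ⊕ Fin d) (Fin d ⊕ Fin d) ℝ) (κ : ℝ),
      Q.PosDef ∧ Q.IsSymm ∧ 0 < κ ∧
      ∀ H : Matrix (Fin d) (Fin d) ℝ, H.IsSymm →
        (H - α • (1 : Matrix (Fin d) (Fin d) ℝ)).PosSemidef →
        (β • (1 : Matrix (Fin d) (Fin d) ℝ) - H).PosSemidef →
        ∀ ξ : Fin d ⊕ Fin d → ℝ,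
          ξ ⬝ᵥ ((Matrix.fromBlocks (0 : Matrix (Fin d) (Fin d) ℝ)
              (1 : Matrix (Fin d) (Fin d) ℝ) (-H)
              (-(γ • (1 : Matrix (Fin d) (Fin d) ℝ))) * Q) *ᵥ ξ)
            ≤ -κ * (ξ ⬝ᵥ (Q *ᵥ ξ)) := by
  obtain ⟨B, hβB, hBgap⟩ := exists_upper_bound_of_sqrt_sub_sqrt_lt hα hαβ hgap
  obtain ⟨c, κ, hc₀, hc, hκ₀, hκ⟩ := exists_contraction_rate hγ hBgap
  refine ⟨metric γ (α + B), κ, posDef_metric (by nlinarith), isSymm_metric γ (α + B), hκ₀, ?_⟩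
  intro H _ hHα hHβ
  have hHB : (B • 1 - H).PosSemidef := by
    have := hHβ.add ((PosSemidef.one (n := Fin d) (R := ℝ)).smul (sub_nonneg.2 hβB))
    rwa [sub_smul, sub_add_sub_cancel'] at this
  exact dotProduct_jacobian_mul_metric_mulVec_le hc₀ hc hκ hHα hHB

/-- existence of a distorted norm (a symmetric positive definite matrix `Q`)
and a rate `κ > 0` such that the Jacobian `J` of the kinetic Langevin drift satisfies
`⟨ξ, J Q ξ⟩ ≤ -κ ⟨ξ, Q ξ⟩` uniformly over Hessians `α·Id ≤ H ≤ β·Id`. -/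
theorem langevin_contraction_matrix
    (d : ℕ) (hd : 1 ≤ d) (γ α β : ℝ)
    (hγ : 0 < γ) (hα : 0 < α) (hαβ : α < β)
    (hgap : Real.sqrt β - Real.sqrt α < γ) :
    ∃ (Q : Matrix (Fin d ⊕ Fin d) (Fin d ⊕ Fin d) ℝ) (κ : ℝ),
      Q.PosDef ∧ Q.IsSymm ∧ 0 < κ ∧
      ∀ H : Matrix (Fin d) (Fin d) ℝ, H.IsSymm →
        (H - α • (1 : Matrix (Fin d) (Fin d) ℝ)).PosSemidef →
        (β • (1 : Matrix (Fin d) (Fin d) ℝ) - H).PosSemidef →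
        ∀ ξ : Fin d ⊕ Fin d → ℝ,
          ξ ⬝ᵥ ((Matrix.fromBlocks (0 : Matrix (Fin d) (Fin d) ℝ)
              (1 : Matrix (Fin d) (Fin d) ℝ) (-H)
              (-(γ • (1 : Matrix (Fin d) (Fin d) ℝ))) * Q) *ᵥ ξ)
            ≤ -κ * (ξ ⬝ᵥ (Q *ᵥ ξ)) :=
  langevin_contraction_matrix_general d γ α β hγ hα hαβ hgap
end

section
/- Let γ > 0 and 0 < α < β be real numbers with √β − √α < γ. Then there exist real numbers b, c with 0 < b and b² < c such that for every ℓ ∈ [α, β], (c + γb − ℓ)² < 4b(γc − bℓ). -/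
/-- scalar core of the construction of the distorted norm for the kinetic
Langevin dynamics: existence of coefficients `b, c` with `0 < b`, `b² < c`, such that
`(c + γb − ℓ)² < 4b(γc − bℓ)` for every `ℓ ∈ [α, β]`. -/
theorem scalar_coefficients_exist
    (γ α β : ℝ) (hγ : 0 < γ) (hα : 0 < α) (hαβ : α < β)
    (hgap : Real.sqrt β - Real.sqrt α < γ) :
    ∃ b c : ℝ, 0 < b ∧ b ^ 2 < c ∧
      ∀ ℓ ∈ Set.Icc α β, (c + γ * b - ℓ) ^ 2 < 4 * b * (γ * c - b * ℓ) := by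
  have hβ : 0 < β := lt_trans hα hαβ
  set a := Real.sqrt α with ha_def
  set B := Real.sqrt β with hB_def
  have ha2 : a ^ 2 = α := Real.sq_sqrt hα.le
  have hB2 : B ^ 2 = β := Real.sq_sqrt hβ.le
  have ha0 : 0 < a := Real.sqrt_pos.mpr hα
  have haB : a ≤ B := Real.sqrt_le_sqrt hαβ.le
  refine ⟨γ / 2, γ ^ 2 / 2 + a * B, by positivity, by nlinarith [mul_pos ha0 (lt_of_lt_of_le ha0 haB)], ?_⟩
  rintro ℓ ⟨h1, h2⟩
  have hℓ0 : 0 < ℓ := lt_of_lt_of_le hα h1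
  set s := Real.sqrt ℓ with hs_def
  have hs2 : s ^ 2 = ℓ := Real.sq_sqrt hℓ0.le
  have has : a ≤ s := Real.sqrt_le_sqrt h1
  have hsB : s ≤ B := Real.sqrt_le_sqrt h2
  -- key: (ℓ - a*B)^2 ≤ (B - a)^2 * ℓ < γ^2 * ℓ
  have key : (ℓ - a * B) ^ 2 ≤ (B - a) ^ 2 * ℓ := by
    nlinarith [mul_nonneg (mul_nonneg (sub_nonneg.mpr has) (by linarith : (0:ℝ) ≤ s + B))
        (mul_nonneg (sub_nonneg.mpr hsB) (by linarith : (0:ℝ) ≤ s + a)), hs2]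
  have hγ2 : (B - a) ^ 2 < γ ^ 2 := by
    nlinarith [sub_nonneg.mpr haB]
  nlinarith [key, mul_lt_mul_of_pos_right hγ2 hℓ0]
end

section
/- Let d ≥ 1, γ > 0 and 0 < α < β be real numbers. Let b, c ∈ ℝ with b > 0 be such that for every ℓ ∈ [α, β], (c + γb − ℓ)² < 4b(γc − bℓ). Then there exists ε > 0 such that for every symmetric matrix H ∈ ℝ^{d×d} with α·Id ≤ H ≤ β·Id and all x, v ∈ ℝ^d: b|x|² + (c + γb)⟨x, v⟩ − ⟨x, H v⟩ − b⟨v, H v⟩ + γc|v|² ≥ ε(|x|² + |v|²). -/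
/-!
Subtracting `ε (|x|² + |v|²)` from the form only lowers the coefficients `b` of `|x|²` and
`γ c` of `|v|²` by `ε`, so by continuity it suffices to show that the form is nonnegative as
soon as the discriminant conditions hold, non-strictly, at `ℓ = α` and `ℓ = β`. Completing the
square in `x` leaves a term in `v` whose only nonlinear part is `-|Hv|²`, and
`(H - α)(β - H) ⪰ 0` bounds it by `(α + β)⟨v, Hv⟩ - αβ|v|²`. What remains is affine in
`⟨v, Hv⟩ ∈ [α|v|², β|v|²]`, and nonnegative at both ends by the two discriminant conditions.
No diagonalisation of `H` is needed.
-/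

open Matrix Filter Topology

namespace Matrix

variable {n : Type*} [Fintype n]

theorem IsSymm.dotProduct_mulVec_comm_s19 {H : Matrix n n ℝ} (hH : H.IsSymm) (x y : n → ℝ) :
    x ⬝ᵥ (H *ᵥ y) = (H *ᵥ x) ⬝ᵥ y := by
  rw [dotProduct_mulVec, ← mulVec_transpose, hH.eq]

variable [DecidableEq n] {H : Matrix n n ℝ} {α β : ℝ}

theorem mul_dotProduct_self_le_of_posSemidef_sub_smul_one (hα : (H - α • 1).PosSemidef)
    (x : n → ℝ) : α * (x ⬝ᵥ x) ≤ x ⬝ᵥ (H *ᵥ x) := by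
  simpa [sub_mulVec, smul_mulVec] using hα.dotProduct_mulVec_nonneg x

theorem dotProduct_mulVec_le_of_posSemidef_smul_one_sub (hβ : (β • 1 - H).PosSemidef)
    (x : n → ℝ) : x ⬝ᵥ (H *ᵥ x) ≤ β * (x ⬝ᵥ x) := by
  simpa [sub_mulVec, smul_mulVec] using hβ.dotProduct_mulVec_nonneg x

/-- With `u = (H - α) v` and `u' = (β - H) v`, the commuting factors `H - α` and `β - H` add up
to `β - α`, so `⟨u, (β - H) u⟩ + ⟨u', (H - α) u'⟩ = (β - α) ⟨u, u'⟩`. -/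
theorem dotProduct_sub_smul_mulVec_nonneg (hH : H.IsSymm) (hαβ : α < β)
    (hα : (H - α • 1).PosSemidef) (hβ : (β • 1 - H).PosSemidef) (v : n → ℝ) :
    0 ≤ (H *ᵥ v - α • v) ⬝ᵥ (β • v - H *ᵥ v) := by
  set u := H *ᵥ v - α • v
  set u' := β • v - H *ᵥ v
  have hu : 0 ≤ u ⬝ᵥ (β • u - H *ᵥ u) := by
    rw [dotProduct_sub, dotProduct_smul, smul_eq_mul, sub_nonneg]
    exact dotProduct_mulVec_le_of_posSemidef_smul_one_sub hβ u
  have hu' : 0 ≤ u' ⬝ᵥ (H *ᵥ u' - α • u') := by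
    rw [dotProduct_sub, dotProduct_smul, smul_eq_mul, sub_nonneg]
    exact mul_dotProduct_self_le_of_posSemidef_sub_smul_one hα u'
  have hcomm : H *ᵥ u' - α • u' = β • u - H *ᵥ u := by
    simp only [u, u', mulVec_sub, mulVec_smul]
    module
  have hsum : u + u' = (β - α) • v := by
    simp only [u, u']
    module
  have key : u ⬝ᵥ (β • u - H *ᵥ u) + u' ⬝ᵥ (H *ᵥ u' - α • u') = (β - α) * (u ⬝ᵥ u') := by
    rw [hcomm, ← add_dotProduct, hsum, smul_dotProduct, dotProduct_sub, dotProduct_smul,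
      hH.dotProduct_mulVec_comm_s19, ← smul_dotProduct, ← sub_dotProduct, dotProduct_comm,
      smul_eq_mul]
  exact nonneg_of_mul_nonneg_right (key ▸ add_nonneg hu hu') (sub_pos.2 hαβ)

theorem form_nonneg_of_discrim_nonpos_at_endpoints (hH : H.IsSymm) (hαβ : α < β)
    (hα : (H - α • 1).PosSemidef) (hβ : (β • 1 - H).PosSemidef) {a k m p : ℝ} (ha : 0 < a)
    (hPα : (k - α) ^ 2 ≤ 4 * a * (m - p * α)) (hPβ : (k - β) ^ 2 ≤ 4 * a * (m - p * β))
    (x v : n → ℝ) :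
    0 ≤ a * (x ⬝ᵥ x) + k * (x ⬝ᵥ v) - x ⬝ᵥ (H *ᵥ v) - p * (v ⬝ᵥ (H *ᵥ v)) + m * (v ⬝ᵥ v) := by
  have hlow := mul_dotProduct_self_le_of_posSemidef_sub_smul_one hα v
  have hup := dotProduct_mulVec_le_of_posSemidef_smul_one_sub hβ v
  have hsandwich := dotProduct_sub_smul_mulVec_nonneg hH hαβ hα hβ v
  have hsquare := dotProduct_star_self_nonneg ((2 * a) • x + k • v - H *ᵥ v)
  set w := H *ᵥ v
  simp only [star_trivial, dotProduct_add, add_dotProduct, dotProduct_sub, sub_dotProduct,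
    dotProduct_smul, smul_dotProduct, smul_eq_mul, dotProduct_comm v x, dotProduct_comm w x,
    dotProduct_comm w v] at hsandwich hsquare
  have hβα : 0 < β - α := sub_pos.2 hαβ
  suffices 0 ≤ (β - α) * (4 * a) *
      (a * (x ⬝ᵥ x) + k * (x ⬝ᵥ v) - x ⬝ᵥ w - p * (v ⬝ᵥ w) + m * (v ⬝ᵥ v)) from
    nonneg_of_mul_nonneg_right this (mul_pos hβα (by positivity))
  nlinarith [mul_nonneg hβα.le hsquare, mul_nonneg hβα.le hsandwich,
    mul_nonneg (sub_nonneg.2 hup) (sub_nonneg.2 hPα),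
    mul_nonneg (sub_nonneg.2 hlow) (sub_nonneg.2 hPβ)]

end Matrix

theorem eventually_sq_lt_perturbed {k ℓ b m : ℝ} (h : (k - ℓ) ^ 2 < 4 * b * (m - b * ℓ)) :
    ∀ᶠ ε in 𝓝 0, (k - ℓ) ^ 2 < 4 * (b - ε) * (m - ε - b * ℓ) :=
  continuousAt_const.eventually_lt (by fun_prop) (by simpa using h)

theorem quadratic_form_coercivity_general
    (d : ℕ) (γ α β : ℝ)
    (hαβ : α < β)
    (b c : ℝ) (hb : 0 < b)
    (hscalar : ∀ ℓ ∈ Set.Icc α β, (c + γ * b - ℓ) ^ 2 < 4 * b * (γ * c - b * ℓ)) :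
    ∃ ε : ℝ, 0 < ε ∧
      ∀ H : Matrix (Fin d) (Fin d) ℝ, H.IsSymm →
        (H - α • (1 : Matrix (Fin d) (Fin d) ℝ)).PosSemidef →
        (β • (1 : Matrix (Fin d) (Fin d) ℝ) - H).PosSemidef →
        ∀ x v : Fin d → ℝ,
          ε * (x ⬝ᵥ x + v ⬝ᵥ v) ≤
            b * (x ⬝ᵥ x) + (c + γ * b) * (x ⬝ᵥ v) - x ⬝ᵥ (H *ᵥ v)
              - b * (v ⬝ᵥ (H *ᵥ v)) + γ * c * (v ⬝ᵥ v) := by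
  have hα := eventually_sq_lt_perturbed (hscalar α ⟨le_rfl, hαβ.le⟩)
  have hβ := eventually_sq_lt_perturbed (hscalar β ⟨hαβ.le, le_rfl⟩)
  obtain ⟨ε, hε, hεb, hεα, hεβ⟩ := ((eventually_lt_nhds hb).and (hα.and hβ)).exists_gt
  refine ⟨ε, hε, fun H hH hHα hHβ x v => ?_⟩
  have := form_nonneg_of_discrim_nonpos_at_endpoints hH hαβ hHα hHβ (sub_pos.2 hεb)
    hεα.le hεβ.le x v
  linarith

/-- quadratic-form coercivity: if the scalar coefficient inequalities hold
on `[α, β]`, then the associated quadratic form in `(x, v)` is uniformly coercive over all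
symmetric matrices `H` with `α·Id ≤ H ≤ β·Id`. -/
theorem quadratic_form_coercivity
    (d : ℕ) (hd : 1 ≤ d) (γ α β : ℝ)
    (hγ : 0 < γ) (hα : 0 < α) (hαβ : α < β)
    (b c : ℝ) (hb : 0 < b)
    (hscalar : ∀ ℓ ∈ Set.Icc α β, (c + γ * b - ℓ) ^ 2 < 4 * b * (γ * c - b * ℓ)) :
    ∃ ε : ℝ, 0 < ε ∧
      ∀ H : Matrix (Fin d) (Fin d) ℝ, H.IsSymm →
        (H - α • (1 : Matrix (Fin d) (Fin d) ℝ)).PosSemidef →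
        (β • (1 : Matrix (Fin d) (Fin d) ℝ) - H).PosSemidef →
        ∀ x v : Fin d → ℝ,
          ε * (x ⬝ᵥ x + v ⬝ᵥ v) ≤
            b * (x ⬝ᵥ x) + (c + γ * b) * (x ⬝ᵥ v) - x ⬝ᵥ (H *ᵥ v)
              - b * (v ⬝ᵥ (H *ᵥ v)) + γ * c * (v ⬝ᵥ v) :=
  quadratic_form_coercivity_general d γ α β hαβ b c hb hscalar
end
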